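/- arXiv:0811.2131 — 4 statements merged into one kernel-verified Lean document; each statement's English description precedes it below -/
import Mathlib

section
/- For z, ζ in the open upper half-plane with |ζ| > 1 and z ≠ ζ, the modified Green function satisfies |G_m(z,ζ) − G(z,ζ)| ≤ (1/π) ∑_{k=1}^{m} k y η |z|^{k-1} / |ζ|^{1+k}, where y = Im z and η = Im ζ. -/
/-!
The logarithms cancel, since `log |ζ| = log |ζ̄|`, so `G_m - G` is `(2π)⁻¹ ∑ Re (z^k/k · (w - w̄))`
with `w = ζ^{-k}`, and `Re (a (w - w̄)) = -2 Im a Im w`. Each factor `Im (u^k)` is bounded by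
`k |Im u| |u|^{k-1}` (induction on `k`), applied to `u = z` and to `u = ζ⁻¹`, where
`Im ζ⁻¹ = -Im ζ / |ζ|²`.
-/

/-- The Green function of the upper half-plane. -/
noncomputable def G (z ζ : ℂ) : ℝ :=
  1 / (2 * Real.pi) *
    (Real.log (‖z - ζ‖) - Real.log (‖z - starRingEnd ℂ ζ‖))

/-- The modified kernel `E_{m+1}` evaluated at `z - ζ` (its correction term depends on `ζ`). -/
noncomputable def Em1 (m : ℕ) (z ζ : ℂ) : ℝ :=
  1 / (2 * Real.pi) * Real.log (‖z - ζ‖) -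
    (if 1 < ‖ζ‖ then
      1 / (2 * Real.pi) *
        (Complex.log ζ - ∑ k ∈ Finset.Icc 1 m, z ^ k / (k * ζ ^ k)).re
    else 0)

/-- The modified Green function `G_m(z,ζ) = E_{m+1}(z-ζ) - E_{m+1}(z-ζ̄)`. -/
noncomputable def Gm (m : ℕ) (z ζ : ℂ) : ℝ :=
  Em1 m z ζ - Em1 m z (starRingEnd ℂ ζ)

open ComplexConjugate Finset

namespace Complex

theorem abs_im_pow_succ_le (w : ℂ) (k : ℕ) :
    |(w ^ (k + 1)).im| ≤ (k + 1) * |w.im| * ‖w‖ ^ k := by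
  induction k with
  | zero => simp
  | succ k ih =>
    calc |(w ^ (k + 1 + 1)).im|
        = |(w ^ (k + 1)).re * w.im + (w ^ (k + 1)).im * w.re| := by
          rw [pow_succ, mul_im]
      _ ≤ |(w ^ (k + 1)).re| * |w.im| + |(w ^ (k + 1)).im| * |w.re| := by
          rw [← abs_mul, ← abs_mul]; exact abs_add_le _ _
      _ ≤ ‖w‖ ^ (k + 1) * |w.im| + ((k + 1) * |w.im| * ‖w‖ ^ k) * ‖w‖ := by
          gcongr
          · exact (abs_re_le_norm _).trans (norm_pow w _).le
          · exact abs_re_le_norm w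
      _ = (↑(k + 1) + 1) * |w.im| * ‖w‖ ^ (k + 1) := by
          push_cast; ring

theorem abs_im_inv_pow_succ_le (ζ : ℂ) (k : ℕ) :
    |((ζ ^ (k + 1))⁻¹).im| ≤ (k + 1) * |ζ.im| / ‖ζ‖ ^ (k + 2) := by
  calc |((ζ ^ (k + 1))⁻¹).im| = |(ζ⁻¹ ^ (k + 1)).im| := by rw [inv_pow]
    _ ≤ (k + 1) * |ζ⁻¹.im| * ‖ζ⁻¹‖ ^ k := abs_im_pow_succ_le _ _
    _ = (k + 1) * |ζ.im| / ‖ζ‖ ^ (k + 2) := by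
      rw [inv_im, norm_inv, abs_div, abs_neg, abs_of_nonneg (normSq_nonneg ζ),
        normSq_eq_norm_sq, inv_pow, pow_add]
      ring

theorem re_div_sub_div_conj (a w : ℂ) (c : ℝ) :
    (a / (c * w) - a / (c * conj w)).re = -2 * a.im * (w⁻¹).im / c := by
  have : a / (c * w) - a / (c * conj w) = (a * w⁻¹ - a * conj w⁻¹) / c := by
    rw [map_inv₀]; ring
  rw [this, div_ofReal_re]
  simp only [sub_re, mul_re, conj_re, conj_im]
  ring

end Complex

open Complex

theorem Gm_sub_G_eq (m : ℕ) (z : ℂ) {ζ : ℂ} (h1 : 1 < ‖ζ‖) :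
    Gm m z ζ - G z ζ = -(1 / Real.pi) * ∑ k ∈ Icc 1 m, (z ^ k).im * ((ζ ^ k)⁻¹).im / k := by
  have hterm (k : ℕ) : (z ^ k / (k * ζ ^ k) - z ^ k / (k * conj ζ ^ k)).re
      = -2 * ((z ^ k).im * ((ζ ^ k)⁻¹).im / k) := by
    rw [← ofReal_natCast, ← map_pow, re_div_sub_div_conj]; ring
  calc Gm m z ζ - G z ζ
      = 1 / (2 * Real.pi) * ∑ k ∈ Icc 1 m, (z ^ k / (k * ζ ^ k) - z ^ k / (k * conj ζ ^ k)).re := by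
        simp only [Gm, Em1, G, if_pos h1, sub_re, log_re, norm_conj, re_sum,
          sum_sub_distrib]
        ring
    _ = _ := by
        rw [sum_congr rfl fun k _ => hterm k, ← mul_sum]
        ring

theorem abs_im_pow_mul_im_inv_pow_div_le (z ζ : ℂ) {k : ℕ} (hk : 1 ≤ k) :
    |(z ^ k).im * ((ζ ^ k)⁻¹).im / k| ≤
      k * |z.im| * |ζ.im| * ‖z‖ ^ (k - 1) / ‖ζ‖ ^ (1 + k) := by
  obtain ⟨j, rfl⟩ := Nat.exists_eq_add_of_le' hk
  have hj : (0 : ℝ) < j + 1 := by positivity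
  calc |(z ^ (j + 1)).im * ((ζ ^ (j + 1))⁻¹).im / ↑(j + 1)|
      = |(z ^ (j + 1)).im| * |((ζ ^ (j + 1))⁻¹).im| / (j + 1) := by
        rw [abs_div, abs_mul, Nat.abs_cast]; push_cast; rfl
    _ ≤ ((j + 1) * |z.im| * ‖z‖ ^ j) * ((j + 1) * |ζ.im| / ‖ζ‖ ^ (j + 2)) / (j + 1) := by
        gcongr
        exacts [abs_im_pow_succ_le z j, abs_im_inv_pow_succ_le ζ j]
    _ = ↑(j + 1) * |z.im| * |ζ.im| * ‖z‖ ^ (j + 1 - 1) / ‖ζ‖ ^ (1 + (j + 1)) := by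
        rw [Nat.add_sub_cancel, add_comm 1, add_assoc]
        push_cast
        field_simp

theorem stmt6_general (m : ℕ) (z ζ : ℂ) (hz : 0 < z.im) (hζ : 0 < ζ.im)
    (h1 : 1 < ‖ζ‖) :
    |Gm m z ζ - G z ζ| ≤
      1 / Real.pi * ∑ k ∈ Finset.Icc 1 m,
        (k : ℝ) * z.im * ζ.im * ‖z‖ ^ (k - 1) / ‖ζ‖ ^ (1 + k) := by
  rw [Gm_sub_G_eq m z h1, abs_mul, abs_neg, abs_of_pos (by positivity)]
  gcongr
  refine (abs_sum_le_sum_abs _ _).trans (sum_le_sum fun k hk => ?_)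
  simpa only [abs_of_pos hz, abs_of_pos hζ] using
    abs_im_pow_mul_im_inv_pow_div_le z ζ (mem_Icc.mp hk).1

theorem stmt6 (m : ℕ) (z ζ : ℂ) (hz : 0 < z.im) (hζ : 0 < ζ.im)
    (h1 : 1 < ‖ζ‖) (hne : z ≠ ζ) :
    |Gm m z ζ - G z ζ| ≤
      1 / Real.pi * ∑ k ∈ Finset.Icc 1 m,
        (k : ℝ) * z.im * ζ.im * ‖z‖ ^ (k - 1) / ‖ζ‖ ^ (1 + k) :=
  stmt6_general m z ζ hz hζ h1
end

section
/- Let ν be a finite positive Borel measure on ℝ, β = 2 − α with 0 < α ≤ 2, and suppose z = x+iy with y > 0 satisfies ν(B(z,t) ∩ ℝ) ≤ λ (t/|z|)^{2−α} for all t > 0. Then ∫_{y}^{3|z|} t^{-2} dν_z(t) ≤ (λ/|z|²)(1/3^α + (2/α)(|z|/y)^α), where ν_z(t) = ν({ξ ∈ ℝ : |ξ − z| ≤ t}). -/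
/-!
Layer-cake formula for `f ξ = |ξ - z|⁻²` against `ν` restricted to the annulus
`y ≤ |ξ - z| ≤ 3|z|` (the paper's integration by parts, after the substitution `s = t⁻²`).
Since `f ≤ y⁻²`, only levels `s ≤ y⁻²` contribute. Below `s = (3|z|)⁻²` the level sets are
bounded by the whole mass `ν_z(3|z|) ≤ λ 3^(2-α)`; above it, `{f > s}` lies in the disk of
radius `s^(-1/2)`, of mass at most `λ |z|^(α-2) s^(α/2-1)`, which is integrable at `0` as `α > 0`.
-/

open MeasureTheory Set

theorem integral_le_of_meas_lt_le {X : Type*} [MeasurableSpace X] {μ : Measure X}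
    [IsFiniteMeasure μ] {f : X → ℝ} (hf : Measurable f) (hf0 : ∀ x, 0 ≤ f x)
    {a b C : ℝ} {g : ℝ → ℝ} (ha : 0 ≤ a) (hab : a ≤ b) (hfb : ∀ x, f x ≤ b)
    (hC : ∀ s ∈ Ioc 0 a, μ.real {x | s < f x} ≤ C)
    (hg : ∀ s ∈ Ioc a b, μ.real {x | s < f x} ≤ g s) (hgi : IntervalIntegrable g volume a b) :
    ∫ x, f x ∂μ ≤ C * a + ∫ s in a..b, g s := by
  set G : ℝ → ℝ := fun s => μ.real {x | s < f x}
  have hG : Antitone G := fun s t hst => measureReal_mono fun x hx => hst.trans_lt hx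
  have hfi : Integrable f μ :=
    .of_bound hf.aestronglyMeasurable b
      (.of_forall fun x => by simpa [abs_of_nonneg (hf0 x)] using hfb x)
  have hG_tail : ∫ s in Ioi 0, G s = ∫ s in 0..b, G s := by
    rw [intervalIntegral.integral_of_le (ha.trans hab)]
    refine setIntegral_eq_of_subset_of_forall_sdiff_eq_zero measurableSet_Ioi
      Ioc_subset_Ioi_self fun s hs => ?_
    have hbs : b < s := lt_of_not_ge fun h => hs.2 ⟨hs.1, h⟩
    simp [G, fun x => (hfb x).trans hbs.le |>.not_gt]
  rw [hfi.integral_eq_integral_meas_lt (.of_forall hf0), hG_tail,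
    ← intervalIntegral.integral_add_adjacent_intervals hG.intervalIntegrable hG.intervalIntegrable]
  gcongr
  · calc ∫ s in 0..a, G s ≤ ∫ _ in 0..a, C :=
          intervalIntegral.integral_mono_on_of_le_Ioo ha hG.intervalIntegrable
            intervalIntegrable_const fun s hs => hC s (Ioo_subset_Ioc_self hs)
      _ = C * a := by simp [mul_comm]
  · exact intervalIntegral.integral_mono_on_of_le_Ioo hab hG.intervalIntegrable hgi
      fun s hs => hg s (Ioo_subset_Ioc_self hs)

theorem im_le_norm_ofReal_sub (z : ℂ) (ξ : ℝ) : z.im ≤ ‖(ξ - z : ℂ)‖ :=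
  calc z.im ≤ |((ξ : ℂ) - z).im| := by simp [le_abs_self]
    _ ≤ _ := Complex.abs_im_le_norm _

theorem le_rpow_neg_half_of_lt_one_div_sq {d s : ℝ} (hd : 0 ≤ d) (hs : 0 < s)
    (h : s < 1 / d ^ 2) : d ≤ s ^ (-(1 / 2) : ℝ) := by
  have hd2 : d ^ 2 < s⁻¹ := by
    rcases hd.eq_or_lt with rfl | hd
    · simpa using hs
    · rw [← one_div, lt_one_div (by positivity) hs]
      exact h
  rw [Real.rpow_neg hs.le, ← Real.sqrt_eq_rpow, ← Real.sqrt_inv]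
  exact Real.le_sqrt_of_sq_le hd2.le

theorem rpow_neg_half_div_rpow_two_sub {s r : ℝ} (hs : 0 < s) (hr : 0 < r) (α : ℝ) :
    (s ^ (-(1 / 2) : ℝ) / r) ^ (2 - α) = r ^ (α - 2) * s ^ (α / 2 - 1) := by
  rw [Real.div_rpow (by positivity) hr.le, ← Real.rpow_mul hs.le, div_eq_mul_inv,
    ← Real.rpow_neg hr.le, neg_sub, mul_comm]
  ring_nf

theorem measureReal_lt_one_div_sq_le {ν : Measure ℝ} [IsFiniteMeasure ν] {z : ℂ} {α l : ℝ}
    (hν : ∀ t > 0, ν.real {ξ : ℝ | ‖(↑ξ - z : ℂ)‖ ≤ t} ≤ l * (t / ‖z‖) ^ (2 - α))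
    (hz : 0 < ‖z‖) {s : ℝ} (hs : 0 < s) :
    ν.real {ξ : ℝ | s < 1 / ‖(↑ξ - z : ℂ)‖ ^ 2} ≤ l * ‖z‖ ^ (α - 2) * s ^ (α / 2 - 1) :=
  calc _ ≤ ν.real {ξ : ℝ | ‖(↑ξ - z : ℂ)‖ ≤ s ^ (-(1 / 2) : ℝ)} :=
        measureReal_mono fun ξ => le_rpow_neg_half_of_lt_one_div_sq (norm_nonneg _) hs
    _ ≤ l * (s ^ (-(1 / 2) : ℝ) / ‖z‖) ^ (2 - α) := hν _ (by positivity)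
    _ = _ := by rw [rpow_neg_half_div_rpow_two_sub hs hz, mul_assoc]

theorem integral_const_mul_rpow_le {c α a b : ℝ} (hc : 0 ≤ c) (hα : 0 < α) (ha : 0 ≤ a) :
    ∫ s in a..b, c * s ^ (α / 2 - 1) ≤ c * (2 / α) * b ^ (α / 2) := by
  rw [intervalIntegral.integral_const_mul, integral_rpow (by left; linarith), sub_add_cancel]
  have ha_pow : 0 ≤ a ^ (α / 2) := Real.rpow_nonneg ha _
  rw [mul_assoc]
  gcongr
  rw [div_le_iff₀ (by positivity)]
  field_simp
  linarith

theorem three_rpow_two_sub_mul_one_div_sq {r : ℝ} (hr : 0 < r) (α : ℝ) :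
    3 ^ (2 - α) * (1 / (3 * r) ^ 2) = 1 / r ^ 2 * (1 / 3 ^ α) := by
  rw [Real.rpow_sub three_pos, Real.rpow_two]
  field_simp

theorem rpow_sub_two_mul_one_div_sq_rpow {r y : ℝ} (hr : 0 < r) (hy : 0 < y) (α : ℝ) :
    r ^ (α - 2) * (1 / y ^ 2) ^ (α / 2) = 1 / r ^ 2 * (r / y) ^ α := by
  have hy2 : (y ^ 2) ^ (α / 2) = y ^ α := by
    rw [← Real.rpow_two, ← Real.rpow_mul hy.le, mul_div_cancel₀ _ two_ne_zero]
  rw [Real.rpow_sub hr, Real.rpow_two, Real.div_rpow hr.le hy.le, one_div,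
    Real.inv_rpow (by positivity), hy2]
  field_simp

theorem mul_add_integral_rpow_le {α l r y : ℝ} (hα : 0 < α) (hl : 0 ≤ l) (hr : 0 < r)
    (hy : 0 < y) :
    l * 3 ^ (2 - α) * (1 / (3 * r) ^ 2) +
        ∫ s in 1 / (3 * r) ^ 2..1 / y ^ 2, l * r ^ (α - 2) * s ^ (α / 2 - 1) ≤
      l / r ^ 2 * (1 / 3 ^ α + 2 / α * (r / y) ^ α) :=
  calc _ ≤ l * 3 ^ (2 - α) * (1 / (3 * r) ^ 2) +
        l * r ^ (α - 2) * (2 / α) * (1 / y ^ 2) ^ (α / 2) := by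
        gcongr
        exact integral_const_mul_rpow_le (by positivity) hα (by positivity)
    _ = _ := by
        linear_combination l * three_rpow_two_sub_mul_one_div_sq hr α +
          2 / α * l * rpow_sub_two_mul_one_div_sq_rpow hr hy α

theorem stmt9_general (ν : Measure ℝ) [IsFiniteMeasure ν] (α l : ℝ)
    (hα : 0 < α) (z : ℂ) (hy : 0 < z.im)
    (hν : ∀ t > 0, (ν {ξ : ℝ | ‖(↑ξ - z : ℂ)‖ ≤ t}).toReal ≤
      l * (t / ‖z‖) ^ (2 - α)) :
    ∫ ξ in {ξ : ℝ | z.im ≤ ‖(↑ξ - z : ℂ)‖ ∧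
        ‖(↑ξ - z : ℂ)‖ ≤ 3 * ‖z‖},
        1 / ‖(↑ξ - z : ℂ)‖ ^ 2 ∂ν ≤
      l / ‖z‖ ^ 2 *
        (1 / 3 ^ α + 2 / α * (‖z‖ / z.im) ^ α) := by
  set S := {ξ : ℝ | z.im ≤ ‖(↑ξ - z : ℂ)‖ ∧ ‖(↑ξ - z : ℂ)‖ ≤ 3 * ‖z‖}
  have hyz : z.im ≤ ‖z‖ := Complex.im_le_norm z
  have hz : 0 < ‖z‖ := hy.trans_le hyz
  have hl : 0 ≤ l :=
    nonneg_of_mul_nonneg_left (ENNReal.toReal_nonneg.trans (hν 1 one_pos)) (by positivity)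
  have hmass (s : ℝ) : (ν.restrict S).real {ξ | s < 1 / ‖(↑ξ - z : ℂ)‖ ^ 2} ≤ l * 3 ^ (2 - α) :=
    calc _ ≤ ν.real S :=
          (measureReal_mono (subset_univ _)).trans_eq (measureReal_restrict_apply_univ S)
      _ ≤ ν.real {ξ : ℝ | ‖(↑ξ - z : ℂ)‖ ≤ 3 * ‖z‖} := measureReal_mono fun ξ hξ => hξ.2
      _ ≤ l * (3 * ‖z‖ / ‖z‖) ^ (2 - α) := hν _ (by positivity)
      _ = l * 3 ^ (2 - α) := by rw [mul_div_cancel_right₀ _ hz.ne']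
  have hfb (ξ : ℝ) : 1 / ‖(↑ξ - z : ℂ)‖ ^ 2 ≤ 1 / z.im ^ 2 := by
    gcongr
    exact im_le_norm_ofReal_sub z ξ
  have hab : 1 / (3 * ‖z‖) ^ 2 ≤ 1 / z.im ^ 2 := by gcongr; linarith
  refine le_trans ?_ (mul_add_integral_rpow_le hα hl hz hy)
  exact integral_le_of_meas_lt_le (by fun_prop) (fun ξ => by positivity) (by positivity) hab hfb
    (fun s _ => hmass s)
    (fun s hs => (ENNReal.toReal_mono (measure_ne_top _ _) (Measure.restrict_le_self _)).trans
      (measureReal_lt_one_div_sq_le hν hz (hs.1.trans_le' (by positivity))))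
    ((intervalIntegral.intervalIntegrable_rpow' (by linarith)).const_mul _)

theorem stmt9 (ν : Measure ℝ) [IsFiniteMeasure ν] (α l : ℝ)
    (hα : 0 < α) (hα2 : α ≤ 2) (z : ℂ) (hy : 0 < z.im)
    (hν : ∀ t > 0, (ν {ξ : ℝ | ‖(↑ξ - z : ℂ)‖ ≤ t}).toReal ≤
      l * (t / ‖z‖) ^ (2 - α)) :
    ∫ ξ in {ξ : ℝ | z.im ≤ ‖(↑ξ - z : ℂ)‖ ∧
        ‖(↑ξ - z : ℂ)‖ ≤ 3 * ‖z‖},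
        1 / ‖(↑ξ - z : ℂ)‖ ^ 2 ∂ν ≤
      l / ‖z‖ ^ 2 *
        (1 / 3 ^ α + 2 / α * (‖z‖ / z.im) ^ α) :=
  stmt9_general ν α l hα z hy hν
end

section
/- Let ν be a finite positive Borel measure on the closed upper half-plane, 0 < α < 2, and suppose z = x+iy with y > 0 satisfies ν(B(z,t)) ≤ λ (t/|z|)^{2−α} for all t > 0. Then ∫_0^{y/2} log(3y/t) dν_z(t) ≤ λ (y/|z|)^{2−α} (log 6 / 2^{2−α} + 1/((2−α) 2^{2−α})), where ν_z(t) = ν(B(z,t)). -/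
/-!
Layer cake: within `closedBall z (y / 2)` the superlevel set `{t < log (3y / |ζ - z|)}` lies in
the ball of radius `min (y / 2) (3y e⁻ᵗ)`, so its mass is at most
`λ (y / |z|)^(2-α) · min (1/2) (3e⁻ᵗ)^(2-α)`. Integrating in `t`, the plateau `0 < t ≤ log 6`
contributes `log 6 / 2^(2-α)` and the exponential tail `1 / ((2-α) 2^(2-α))`.
-/

open MeasureTheory Set Real Metric

theorem integral_le_setIntegral_Ioi_of_meas_lt_le {α : Type*} [MeasurableSpace α]
    {μ : Measure α} {f : α → ℝ} {g : ℝ → ℝ} (hf_nn : 0 ≤ᵐ[μ] f) (hf : AEMeasurable f μ)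
    (hg : IntegrableOn g (Ioi 0)) (hg_nn : ∀ t ∈ Ioi 0, 0 ≤ g t)
    (hfg : ∀ t ∈ Ioi 0, μ {a | t < f a} ≤ ENNReal.ofReal (g t)) :
    ∫ a, f a ∂μ ≤ ∫ t in Ioi 0, g t := by
  rw [integral_eq_lintegral_of_nonneg_ae hf_nn hf.aestronglyMeasurable]
  refine ENNReal.toReal_le_of_le_ofReal (setIntegral_nonneg measurableSet_Ioi hg_nn) ?_
  calc ∫⁻ a, ENNReal.ofReal (f a) ∂μ = ∫⁻ t in Ioi 0, μ {a | t < f a} :=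
        lintegral_eq_lintegral_meas_lt μ hf_nn hf
    _ ≤ ∫⁻ t in Ioi 0, ENNReal.ofReal (g t) :=
        setLIntegral_mono_ae hg.aemeasurable.ennreal_ofReal (ae_of_all _ hfg)
    _ = ENNReal.ofReal (∫ t in Ioi 0, g t) :=
        (ofReal_integral_eq_lintegral_ofReal hg
          (ae_restrict_of_forall_mem measurableSet_Ioi hg_nn)).symm

theorem setOf_lt_log_div_dist_subset_closedBall {X : Type*} [PseudoMetricSpace X] (z : X)
    {a : ℝ} (ha : 0 < a) (t : ℝ) :
    {x | t < log (a / dist x z)} ⊆ closedBall z (a * exp (-t)) := by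
  intro x hx
  rw [mem_closedBall]
  rcases (dist_nonneg : 0 ≤ dist x z).eq_or_lt with hd | hd
  · rw [← hd]; positivity
  · have : exp t * dist x z < a :=
      (lt_div_iff₀ hd).mp ((lt_log_iff_exp_lt (by positivity)).mp hx)
    rw [exp_neg, ← div_eq_mul_inv, le_div_iff₀ (exp_pos t)]
    linarith

theorem setIntegral_closedBall_log_div_dist_le {X : Type*} [PseudoMetricSpace X]
    [MeasurableSpace X] [OpensMeasurableSpace X] (ν : Measure X) (z : X) {a r : ℝ} (ha : 0 < a)
    (hra : r ≤ a) {g : ℝ → ℝ} (hg : IntegrableOn g (Ioi 0)) (hg_nn : ∀ t ∈ Ioi 0, 0 ≤ g t)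
    (hν : ∀ t ∈ Ioi 0, ν (closedBall z (min r (a * exp (-t)))) ≤ ENNReal.ofReal (g t)) :
    ∫ x in closedBall z r, log (a / dist x z) ∂ν ≤ ∫ t in Ioi 0, g t := by
  refine integral_le_setIntegral_Ioi_of_meas_lt_le ?_ (by fun_prop) hg hg_nn fun t ht => ?_
  · refine ae_restrict_of_forall_mem measurableSet_closedBall fun x hx => ?_
    show 0 ≤ log (a / dist x z)
    rw [← inv_div, log_inv, neg_nonneg]
    exact log_nonpos (by positivity)
      ((div_le_one ha).mpr ((mem_closedBall.mp hx).trans hra))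
  · rw [Measure.restrict_apply' measurableSet_closedBall]
    refine (measure_mono ?_).trans (hν t ht)
    rintro x ⟨hx, hxr⟩
    exact mem_closedBall.mpr (le_min (mem_closedBall.mp hxr)
      (mem_closedBall.mp (setOf_lt_log_div_dist_subset_closedBall z ha t hx)))

theorem mul_exp_neg_rpow {a : ℝ} (ha : 0 ≤ a) (c t : ℝ) :
    (a * exp (-t)) ^ c = a ^ c * exp (-c * t) := by
  rw [mul_rpow ha (exp_pos _).le, ← exp_mul]
  ring_nf

theorem integrableOn_Ioi_min_mul_exp_neg_rpow {a b c : ℝ} (hb : 0 ≤ b) (ha : 0 ≤ a)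
    (hc : 0 < c) : IntegrableOn (fun t => min b (a * exp (-t)) ^ c) (Ioi 0) := by
  refine Integrable.mono' ((exp_neg_integrableOn_Ioi 0 hc).const_mul (a ^ c)) ?_ ?_
  · exact ((by fun_prop : Continuous fun t => min b (a * exp (-t))).rpow_const
      fun _ => Or.inr hc.le).aestronglyMeasurable
  · refine ae_of_all _ fun t => ?_
    have hmin : 0 ≤ min b (a * exp (-t)) := le_min hb (by positivity)
    rw [norm_of_nonneg (rpow_nonneg hmin c), ← mul_exp_neg_rpow ha]
    exact rpow_le_rpow hmin (min_le_right _ _) hc.le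

theorem integral_Ioi_min_mul_exp_neg_rpow {a b c : ℝ} (hb : 0 < b) (hba : b ≤ a)
    (hc : 0 < c) : ∫ t in Ioi 0, min b (a * exp (-t)) ^ c = b ^ c * (log (a / b) + 1 / c) := by
  have ha : 0 < a := hb.trans_le hba
  set L := log (a / b)
  have hL : 0 ≤ L := log_nonneg ((one_le_div hb).mpr hba)
  have hexpL : exp L = a / b := exp_log (by positivity)
  have hint := integrableOn_Ioi_min_mul_exp_neg_rpow hb.le ha.le hc
  have h_near : ∀ t ∈ Ioc 0 L, min b (a * exp (-t)) ^ c = b ^ c := by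
    intro t ht
    have : b ≤ a * exp (-t) := by
      rw [exp_neg, ← div_eq_mul_inv, le_div_iff₀ (exp_pos t), ← le_div_iff₀' hb, ← hexpL]
      exact exp_le_exp.mpr ht.2
    rw [min_eq_left this]
  have h_far : ∀ t ∈ Ioi L, min b (a * exp (-t)) ^ c = a ^ c * exp (-c * t) := by
    intro t ht
    have : a * exp (-t) ≤ b := by
      rw [exp_neg, ← div_eq_mul_inv, div_le_iff₀ (exp_pos t), ← div_le_iff₀' hb, ← hexpL]
      exact (exp_lt_exp.mpr ht).le
    rw [min_eq_right this, mul_exp_neg_rpow ha.le]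
  rw [← Ioc_union_Ioi_eq_Ioi hL, setIntegral_union (Ioc_disjoint_Ioi le_rfl) measurableSet_Ioi
    (hint.mono_set Ioc_subset_Ioi_self) (hint.mono_set (Ioi_subset_Ioi hL)),
    setIntegral_congr_fun measurableSet_Ioc h_near, setIntegral_congr_fun measurableSet_Ioi h_far,
    setIntegral_const, integral_const_mul, integral_exp_mul_Ioi (by linarith)]
  have hdecay : a ^ c * exp (-c * L) = b ^ c := by
    rw [show -c * L = L * -c by ring, exp_mul, hexpL, rpow_neg (by positivity),
      div_rpow ha.le hb.le]
    field_simp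
  rw [Real.volume_real_Ioc_of_le hL, sub_zero, smul_eq_mul, neg_div_neg_eq, ← mul_div_assoc,
    hdecay]
  ring

theorem stmt10_general (ν : Measure ℂ) [IsFiniteMeasure ν] (α l : ℝ)
    (hα2 : α < 2) (z : ℂ) (hy : 0 < z.im)
    (hν : ∀ t > 0, (ν (Metric.closedBall z t)).toReal ≤
      l * (t / ‖z‖) ^ (2 - α)) :
    ∫ ζ in Metric.closedBall z (z.im / 2),
        Real.log (3 * z.im / ‖ζ - z‖) ∂ν ≤
      l * (z.im / ‖z‖) ^ (2 - α) *
        (Real.log 6 / 2 ^ (2 - α) + 1 / ((2 - α) * 2 ^ (2 - α))) := by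
  have hz : 0 < ‖z‖ := norm_pos_iff.mpr fun h => by simp [h] at hy
  have hc : 0 < 2 - α := by linarith
  have hl : 0 ≤ l := nonneg_of_mul_nonneg_left (ENNReal.toReal_nonneg.trans (hν 1 one_pos))
    (rpow_pos_of_pos (by positivity) _)
  set y := z.im
  set c := 2 - α
  simp_rw [← dist_eq_norm]
  have h_ball : ∀ t ∈ Ioi (0 : ℝ), ν (closedBall z (min (y / 2) (3 * y * exp (-t)))) ≤
      ENNReal.ofReal (l * (y / ‖z‖) ^ c * min (1 / 2) (3 * exp (-t)) ^ c) := by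
    intro t _
    have h_scale : min (y / 2) (3 * y * exp (-t)) / ‖z‖ =
        y / ‖z‖ * min (1 / 2) (3 * exp (-t)) := by
      rw [mul_min_of_nonneg _ _ (div_nonneg hy.le hz.le), ← min_div_div_right hz.le]
      congr 1 <;> ring
    rw [mul_assoc l, ← mul_rpow (by positivity) (by positivity), ← h_scale]
    exact (ENNReal.le_ofReal_iff_toReal_le (measure_ne_top _ _) (by positivity)).mpr
      (hν _ (by positivity))
  calc ∫ ζ in closedBall z (y / 2), log (3 * y / dist ζ z) ∂ν
      ≤ ∫ t in Ioi 0, l * (y / ‖z‖) ^ c * min (1 / 2) (3 * exp (-t)) ^ c :=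
        setIntegral_closedBall_log_div_dist_le ν z (by positivity) (by linarith)
          ((integrableOn_Ioi_min_mul_exp_neg_rpow (by norm_num) (by norm_num) hc).const_mul _)
          (fun t _ => by positivity) h_ball
    _ = l * (y / ‖z‖) ^ c * ((1 / 2) ^ c * (log 6 + 1 / c)) := by
        rw [integral_const_mul, integral_Ioi_min_mul_exp_neg_rpow (by norm_num) (by norm_num) hc]
        norm_num
    _ = l * (y / ‖z‖) ^ c * (log 6 / 2 ^ c + 1 / (c * 2 ^ c)) := by
        rw [div_rpow zero_le_one zero_le_two, one_rpow]
        field_simp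

theorem stmt10 (ν : Measure ℂ) [IsFiniteMeasure ν] (α l : ℝ)
    (hα : 0 < α) (hα2 : α < 2) (z : ℂ) (hy : 0 < z.im)
    (hν : ∀ t > 0, (ν (Metric.closedBall z t)).toReal ≤
      l * (t / ‖z‖) ^ (2 - α)) :
    ∫ ζ in Metric.closedBall z (z.im / 2),
        Real.log (3 * z.im / ‖ζ - z‖) ∂ν ≤
      l * (z.im / ‖z‖) ^ (2 - α) *
        (Real.log 6 / 2 ^ (2 - α) + 1 / ((2 - α) * 2 ^ (2 - α))) :=
  stmt10_general ν α l hα2 z hy hν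
end

section
/- Let μ be a positive Borel measure on the upper half-plane with ∫_{ℂ₊} η/(1+|ζ|^{2+m}) dμ(ζ) < ∞ (ζ = ξ+iη), and for ε > 0 let R_ε > 2 be such that ∫_{|ζ|≥R_ε} η/(1+|ζ|^{2+m}) dμ(ζ) < ε. Then for z = x+iy with y > 0 and |z| ≥ 2R_ε, the integral h₃(z) = ∫_{|ζ−z|≤3|z|, |ζ|≥R_ε} |G_m(z,ζ) − G(z,ζ)| dμ(ζ) satisfies h₃(z) ≤ (2^{2m+1}/π)(∑_{k=1}^m k/4^{k-1}) ε y |z|^m. -/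
open MeasureTheory

lemma im_pow_le (w : ℂ) (k : ℕ) : |(w ^ k).im| ≤ k * |w.im| * ‖w‖ ^ (k - 1) := by
  induction k with
  | zero => simp
  | succ j ih =>
    rcases Nat.eq_zero_or_pos j with hj | hj
    · subst hj; simp
    rw [pow_succ]
    have h1 : (w ^ j * w).im = (w ^ j).re * w.im + (w ^ j).im * w.re := Complex.mul_im _ _
    rw [h1]
    have h2 : |(w ^ j).re * w.im + (w ^ j).im * w.re| ≤ |(w ^ j).re| * |w.im| + |(w ^ j).im| * |w.re| := by
      calc _ ≤ |(w ^ j).re * w.im| + |(w ^ j).im * w.re| := abs_add_le _ _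
        _ = _ := by rw [abs_mul, abs_mul]
    refine h2.trans ?_
    have h3 : |(w ^ j).re| ≤ ‖w‖ ^ j := by
      simpa using (Complex.abs_re_le_norm (w ^ j))
    have h4 : |w.re| ≤ ‖w‖ := Complex.abs_re_le_norm w
    have h6 : ‖w‖ ^ (j - 1) * ‖w‖ = ‖w‖ ^ j := by
      rw [← pow_succ]; congr 1; omega
    have h5 : |(w ^ j).im| * |w.re| ≤ (j : ℝ) * |w.im| * ‖w‖ ^ j := by
      calc |(w ^ j).im| * |w.re| ≤ ((j : ℝ) * |w.im| * ‖w‖ ^ (j - 1)) * ‖w‖ := by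
            apply mul_le_mul ih h4 (abs_nonneg _); positivity
        _ = (j : ℝ) * |w.im| * ‖w‖ ^ j := by rw [mul_assoc, h6]
    have h8 : |(w ^ j).re| * |w.im| ≤ ‖w‖ ^ j * |w.im| :=
      mul_le_mul_of_nonneg_right h3 (abs_nonneg _)
    simp only [Nat.succ_sub_one]
    push_cast
    nlinarith [h5, h8]

lemma abs_pow_sub_conj (w : ℂ) (k : ℕ) :
    ‖w ^ k - (starRingEnd ℂ w) ^ k‖ ≤ 2 * k * |w.im| * ‖w‖ ^ (k - 1) := by
  have h : w ^ k - (starRingEnd ℂ w) ^ k = (w ^ k) - (starRingEnd ℂ) (w ^ k) := by rw [map_pow]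
  rw [h, Complex.sub_conj]
  have h2 : ‖(2 * (w ^ k).im : ℝ) * Complex.I‖ = 2 * |(w ^ k).im| := by
    simp [Complex.norm_real, abs_mul]
  rw [h2]
  have := im_pow_le w k
  nlinarith

lemma GmG_eq (m : ℕ) (z ζ : ℂ) (h1 : 1 < ‖ζ‖) :
    Gm m z ζ - G z ζ =
      1 / (2 * Real.pi) *
        ∑ k ∈ Finset.Icc 1 m,
          ((z ^ k / (k * ζ ^ k)).re - (z ^ k / (k * (starRingEnd ℂ ζ) ^ k)).re) := by
  have h1' : 1 < ‖(starRingEnd ℂ) ζ‖ := by rwa [Complex.norm_conj]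
  unfold Gm Em1 G
  rw [if_pos h1, if_pos h1']
  simp only [Complex.sub_re, Complex.log_re, Complex.re_sum, Complex.norm_conj,
    Finset.sum_sub_distrib]
  ring

lemma term_bound (z ζ : ℂ) (hζ : ζ ≠ 0) (k : ℕ) (hk : 1 ≤ k) :
    |(z ^ k / (k * ζ ^ k)).re - (z ^ k / (k * (starRingEnd ℂ ζ) ^ k)).re| ≤
      2 * k * |z.im| * |ζ.im| * ‖z‖ ^ (k - 1) / ‖ζ‖ ^ (k + 1) := by
  set S : ℂ := z ^ k / (k * ζ ^ k) - z ^ k / (k * (starRingEnd ℂ ζ) ^ k) with hS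
  have hkC : (k : ℂ) ≠ 0 := Nat.cast_ne_zero.mpr (by omega)
  have hζk : ζ ^ k ≠ 0 := pow_ne_zero _ hζ
  have hζck : (starRingEnd ℂ ζ) ^ k ≠ 0 := pow_ne_zero _ (by simpa using hζ)
  have heq : S + (starRingEnd ℂ) S =
      (z ^ k - (starRingEnd ℂ z) ^ k) * ((starRingEnd ℂ ζ) ^ k - ζ ^ k) /
        ((k : ℂ) * (ζ ^ k * (starRingEnd ℂ ζ) ^ k)) := by
    simp only [hS, map_sub, map_div₀, map_mul, map_pow, Complex.conj_conj, map_natCast]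
    field_simp
    ring
  have hre : (S + (starRingEnd ℂ) S).re = 2 * S.re := by
    simp [Complex.add_re, Complex.conj_re]; ring
  have e1 : |(z ^ k / (k * ζ ^ k)).re - (z ^ k / (k * (starRingEnd ℂ ζ) ^ k)).re| = |S.re| := by
    rw [hS, Complex.sub_re]
  rw [e1]
  have e2 : |S.re| = |(S + (starRingEnd ℂ) S).re| / 2 := by rw [hre, abs_mul, abs_two]; ring
  rw [e2]
  have e3 : ‖S + (starRingEnd ℂ) S‖ =
      ‖z ^ k - (starRingEnd ℂ z) ^ k‖ *
        ‖(starRingEnd ℂ ζ) ^ k - ζ ^ k‖ /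
        ((k : ℝ) * (‖ζ‖ ^ k * ‖ζ‖ ^ k)) := by
    rw [heq, norm_div, norm_mul]
    simp [map_mul, map_pow, Complex.norm_conj, Complex.norm_natCast]
  have e4 : |(S + (starRingEnd ℂ) S).re| ≤ ‖S + (starRingEnd ℂ) S‖ :=
    Complex.abs_re_le_norm _
  have hA := abs_pow_sub_conj z k
  have hB : ‖(starRingEnd ℂ ζ) ^ k - ζ ^ k‖ ≤ 2 * k * |ζ.im| * ‖ζ‖ ^ (k - 1) := by
    rw [← norm_neg]; simpa [neg_sub] using abs_pow_sub_conj ζ k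
  have haζ : 0 < ‖ζ‖ := by simpa using hζ
  have hkR : (0:ℝ) < k := by exact_mod_cast Nat.lt_of_lt_of_le Nat.zero_lt_one hk
  calc |(S + (starRingEnd ℂ) S).re| / 2 ≤ ‖S + (starRingEnd ℂ) S‖ / 2 := by linarith
    _ = ‖z ^ k - (starRingEnd ℂ z) ^ k‖ *
        ‖(starRingEnd ℂ ζ) ^ k - ζ ^ k‖ /
        ((k : ℝ) * (‖ζ‖ ^ k * ‖ζ‖ ^ k)) / 2 := by rw [e3]
    _ ≤ (2 * k * |z.im| * ‖z‖ ^ (k - 1)) * (2 * k * |ζ.im| * ‖ζ‖ ^ (k - 1)) /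
        ((k : ℝ) * (‖ζ‖ ^ k * ‖ζ‖ ^ k)) / 2 := by
        gcongr
    _ = 2 * k * |z.im| * |ζ.im| * ‖z‖ ^ (k - 1) / ‖ζ‖ ^ (k + 1) := by
        have hsplit : ‖ζ‖ ^ k * ‖ζ‖ ^ k =
            ‖ζ‖ ^ (k - 1) * ‖ζ‖ ^ (k + 1) := by
          rw [← pow_add, ← pow_add]; congr 1; omega
        rw [hsplit]
        have h1 : ‖ζ‖ ^ (k - 1) ≠ 0 := by positivity
        have h2 : ‖ζ‖ ^ (k + 1) ≠ 0 := by positivity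
        field_simp

lemma per_term (m k : ℕ) (hk1 : 1 ≤ k) (hkm : k ≤ m) (Y H A B : ℝ)
    (hY : 0 ≤ Y) (hH : 0 ≤ H) (hA : 0 ≤ A) (hB1 : 1 ≤ B) (hBA : B ≤ 4 * A) :
    2 * k * Y * H * A ^ (k - 1) / B ^ (k + 1) ≤
      (k : ℝ) / 4 ^ (k - 1) * (2 * 2 ^ (2 * m + 1) * Y * A ^ m * (H / (1 + B ^ (2 + m)))) := by
  have hB0 : (0:ℝ) < B := lt_of_lt_of_le one_pos hB1
  have hD : (0:ℝ) < 1 + B ^ (2 + m) := by positivity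
  have hBk : (0:ℝ) < B ^ (k + 1) := by positivity
  have hc : ((k : ℝ) / 4 ^ (k - 1)) * (2 * 2 ^ (2 * m + 1) * Y * A ^ m * (H / (1 + B ^ (2 + m)))) =
      (4 * k * 4 ^ (m + 1 - k)) * (Y * A ^ m * H) / (1 + B ^ (2 + m)) := by
    have h1 : (4:ℝ) ^ (m + 1 - k) * 4 ^ (k - 1) = 4 ^ m := by
      rw [← pow_add]; congr 1; omega
    have h2 : (2:ℝ) ^ (2 * m + 1) = 2 * 4 ^ m := by
      rw [pow_succ, pow_mul]; norm_num; ring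
    have h4 : ((4:ℝ)) ^ (k - 1) ≠ 0 := by positivity
    rw [h2]
    field_simp
    linear_combination (-(4 * Y * A ^ m * H)) * h1
  rw [hc, div_le_div_iff₀ hBk hD]
  have hsum : 1 + B ^ (2 + m) ≤ 2 * B ^ (2 + m) := by
    nlinarith [one_le_pow₀ hB1 (n := 2 + m)]
  have hsplitB : B ^ (2 + m) = B ^ (k + 1) * B ^ (m + 1 - k) := by
    rw [← pow_add]; congr 1; omega
  have hBz : B ^ (m + 1 - k) ≤ 4 ^ (m + 1 - k) * A ^ (m + 1 - k) := by
    rw [← mul_pow]; exact pow_le_pow_left₀ (le_of_lt hB0) hBA _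
  have hAsplit : A ^ (k - 1) * A ^ (m + 1 - k) = A ^ m := by
    rw [← pow_add]; congr 1; omega
  calc 2 * k * Y * H * A ^ (k - 1) * (1 + B ^ (2 + m))
      ≤ 2 * k * Y * H * A ^ (k - 1) * (2 * B ^ (2 + m)) := by
        have : (0:ℝ) ≤ 2 * k * Y * H * A ^ (k - 1) := by positivity
        nlinarith [this]
    _ = 4 * k * Y * H * A ^ (k - 1) * B ^ (m + 1 - k) * B ^ (k + 1) := by
        rw [hsplitB]; ring
    _ ≤ 4 * k * Y * H * A ^ (k - 1) * (4 ^ (m + 1 - k) * A ^ (m + 1 - k)) * B ^ (k + 1) := by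
        gcongr
    _ = 4 * ↑k * 4 ^ (m + 1 - k) * (Y * A ^ m * H) * B ^ (k + 1) := by
        rw [← hAsplit]; ring

lemma ptwise (m : ℕ) (R : ℝ) (hR : 2 < R) (z ζ : ℂ) (hzim : 0 < z.im) (hζim : 0 < ζ.im)
    (hζR : R ≤ ‖ζ‖) (hreg : ‖ζ - z‖ ≤ 3 * ‖z‖) :
    |Gm m z ζ - G z ζ| ≤
      (2 ^ (2 * m + 1) / Real.pi * (∑ k ∈ Finset.Icc 1 m, (k : ℝ) / 4 ^ (k - 1)) * z.im *
        ‖z‖ ^ m) * (ζ.im / (1 + ‖ζ‖ ^ (2 + m))) := by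
  have h1 : 1 < ‖ζ‖ := lt_of_lt_of_le (by linarith) hζR
  have hζ0 : ζ ≠ 0 := by
    intro h; rw [h] at h1; simp at h1; linarith
  have hAnn : 0 ≤ ‖z‖ := norm_nonneg z
  have hBA : ‖ζ‖ ≤ 4 * ‖z‖ := by
    calc ‖ζ‖ = ‖(ζ - z) + z‖ := by ring_nf
      _ ≤ ‖ζ - z‖ + ‖z‖ := norm_add_le _ _
      _ ≤ 3 * ‖z‖ + ‖z‖ := by linarith
      _ = 4 * ‖z‖ := by ring
  rw [GmG_eq m z ζ h1, abs_mul]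
  have hpi : |1 / (2 * Real.pi)| = 1 / (2 * Real.pi) :=
    abs_of_pos (by positivity)
  rw [hpi]
  set C : ℝ := 2 * 2 ^ (2 * m + 1) * z.im * ‖z‖ ^ m *
      (ζ.im / (1 + ‖ζ‖ ^ (2 + m))) with hC
  have hsum : |∑ k ∈ Finset.Icc 1 m,
      ((z ^ k / (k * ζ ^ k)).re - (z ^ k / (k * (starRingEnd ℂ ζ) ^ k)).re)| ≤
      ∑ k ∈ Finset.Icc 1 m, (k : ℝ) / 4 ^ (k - 1) * C := by
    refine (Finset.abs_sum_le_sum_abs _ _).trans (Finset.sum_le_sum fun k hk => ?_)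
    obtain ⟨hk1, hkm⟩ := Finset.mem_Icc.mp hk
    refine (term_bound z ζ hζ0 k hk1).trans ?_
    have h := per_term m k hk1 hkm z.im ζ.im (‖z‖) (‖ζ‖)
      (le_of_lt hzim) (le_of_lt hζim) hAnn (le_of_lt h1) hBA
    rw [abs_of_pos hzim, abs_of_pos hζim]
    calc 2 * ↑k * z.im * ζ.im * ‖z‖ ^ (k - 1) / ‖ζ‖ ^ (k + 1)
        ≤ (k : ℝ) / 4 ^ (k - 1) *
          (2 * 2 ^ (2 * m + 1) * z.im * ‖z‖ ^ m *
            (ζ.im / (1 + ‖ζ‖ ^ (2 + m)))) := by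
          refine h.trans (le_of_eq ?_); ring
      _ = (k : ℝ) / 4 ^ (k - 1) * C := by rw [hC]
  calc 1 / (2 * Real.pi) * |∑ k ∈ Finset.Icc 1 m,
        ((z ^ k / (k * ζ ^ k)).re - (z ^ k / (k * (starRingEnd ℂ ζ) ^ k)).re)|
      ≤ 1 / (2 * Real.pi) * ∑ k ∈ Finset.Icc 1 m, (k : ℝ) / 4 ^ (k - 1) * C := by
        have hp : (0:ℝ) < 1 / (2 * Real.pi) := by positivity
        exact mul_le_mul_of_nonneg_left hsum (le_of_lt hp)
    _ = (2 ^ (2 * m + 1) / Real.pi * (∑ k ∈ Finset.Icc 1 m, (k : ℝ) / 4 ^ (k - 1)) * z.im *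
        ‖z‖ ^ m) * (ζ.im / (1 + ‖ζ‖ ^ (2 + m))) := by
        rw [← Finset.sum_mul, hC]
        have hπ : Real.pi ≠ 0 := Real.pi_ne_zero
        field_simp

theorem stmt17 (m : ℕ) (μ : Measure ℂ) (hsupp : μ {ζ : ℂ | ζ.im ≤ 0} = 0)
    (hμ : ∫⁻ ζ, ENNReal.ofReal (ζ.im / (1 + ‖ζ‖ ^ (2 + m))) ∂μ ≠ ⊤)
    (ε R : ℝ) (hε : 0 < ε) (hR : 2 < R)
    (htail : ∫⁻ ζ in {ζ : ℂ | R ≤ ‖ζ‖},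
        ENNReal.ofReal (ζ.im / (1 + ‖ζ‖ ^ (2 + m))) ∂μ < ENNReal.ofReal ε)
    (z : ℂ) (hy : 0 < z.im) (hz : 2 * R ≤ ‖z‖) :
    ∫⁻ ζ in {ζ : ℂ | ‖ζ - z‖ ≤ 3 * ‖z‖ ∧ R ≤ ‖ζ‖},
        ENNReal.ofReal |Gm m z ζ - G z ζ| ∂μ ≤
      ENNReal.ofReal (2 ^ (2 * m + 1) / Real.pi *
        (∑ k ∈ Finset.Icc 1 m, (k : ℝ) / 4 ^ (k - 1)) * ε * z.im *
        ‖z‖ ^ m) := by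
  set s : Set ℂ := {ζ : ℂ | ‖ζ - z‖ ≤ 3 * ‖z‖ ∧ R ≤ ‖ζ‖} with hs
  set Cf : ℝ := 2 ^ (2 * m + 1) / Real.pi * (∑ k ∈ Finset.Icc 1 m, (k : ℝ) / 4 ^ (k - 1)) *
      z.im * ‖z‖ ^ m with hCf
  have hCf0 : 0 ≤ Cf := by
    rw [hCf]
    have hS : 0 ≤ ∑ k ∈ Finset.Icc 1 m, (k : ℝ) / 4 ^ (k - 1) :=
      Finset.sum_nonneg fun k _ => by positivity
    have : (0:ℝ) ≤ 2 ^ (2 * m + 1) / Real.pi := by positivity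
    positivity
  have hmeas : MeasurableSet s := by
    have hm1 : Measurable fun ζ : ℂ => ‖ζ - z‖ :=
      (continuous_norm.comp (continuous_id.sub continuous_const)).measurable
    have hm2 : Measurable fun ζ : ℂ => ‖ζ‖ := continuous_norm.measurable
    exact (measurableSet_le hm1 measurable_const).inter
      (measurableSet_le measurable_const hm2)
  have him : ∀ᵐ ζ ∂μ, 0 < ζ.im := by
    rw [ae_iff]
    have : {ζ : ℂ | ¬ 0 < ζ.im} = {ζ : ℂ | ζ.im ≤ 0} := by ext ζ; simp [not_lt]
    rw [this]; exact hsupp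
  have hae : ∀ᵐ ζ ∂(μ.restrict s), ENNReal.ofReal |Gm m z ζ - G z ζ| ≤
      ENNReal.ofReal (Cf * (ζ.im / (1 + ‖ζ‖ ^ (2 + m)))) := by
    filter_upwards [ae_restrict_of_ae him, ae_restrict_mem hmeas] with ζ h0 hmem
    exact ENNReal.ofReal_le_ofReal (ptwise m R hR z ζ hy h0 hmem.2 hmem.1)
  calc ∫⁻ ζ in s, ENNReal.ofReal |Gm m z ζ - G z ζ| ∂μ
      ≤ ∫⁻ ζ in s, ENNReal.ofReal (Cf * (ζ.im / (1 + ‖ζ‖ ^ (2 + m)))) ∂μ :=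
        lintegral_mono_ae hae
    _ = ∫⁻ ζ in s, ENNReal.ofReal Cf *
          ENNReal.ofReal (ζ.im / (1 + ‖ζ‖ ^ (2 + m))) ∂μ := by
        congr 1; ext ζ; rw [ENNReal.ofReal_mul hCf0]
    _ = ENNReal.ofReal Cf *
          ∫⁻ ζ in s, ENNReal.ofReal (ζ.im / (1 + ‖ζ‖ ^ (2 + m))) ∂μ :=
        lintegral_const_mul' _ _ ENNReal.ofReal_ne_top
    _ ≤ ENNReal.ofReal Cf *
          ∫⁻ ζ in {ζ : ℂ | R ≤ ‖ζ‖},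
            ENNReal.ofReal (ζ.im / (1 + ‖ζ‖ ^ (2 + m))) ∂μ := by
        gcongr
        exact fun ζ hζ => hζ.2
    _ ≤ ENNReal.ofReal Cf * ENNReal.ofReal ε := by
        gcongr
    _ = ENNReal.ofReal (2 ^ (2 * m + 1) / Real.pi *
        (∑ k ∈ Finset.Icc 1 m, (k : ℝ) / 4 ^ (k - 1)) * ε * z.im *
        ‖z‖ ^ m) := by
        rw [← ENNReal.ofReal_mul hCf0]
        congr 1
        rw [hCf]; ring
end
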